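/- The Ω-cocycle bialgebra (H(∅,Ω), m, 1, Δ_λ, ε, {B⁺_ω ∣ ω ∈ Ω}) of planar rooted forests with all vertices decorated by Ω is the initial object in the category of Ω-cocycle bialgebras: for every Ω-cocycle bialgebra (H, m_H, 1_H, Δ_H, ε_H, {P_ω ∣ ω ∈ Ω}) there exists a unique k-algebra homomorphism φ : H(∅,Ω) → H which is a bialgebra morphism and satisfies φ ∘ B⁺_ω = P_ω ∘ φ for all ω ∈ Ω. -/

import Mathlib

open scoped TensorProduct

universe u v w u'

/-- Decorated planar rooted trees: internal vertices are decorated by `Ω`,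
leaves are decorated by `X ⊔ Ω` (a leaf decorated by `ω : Ω` is `node ω []`). -/
inductive PTree (X : Type u) (Ω : Type v) : Type (max u v)
  | leafX : X → PTree X Ω
  | node : Ω → List (PTree X Ω) → PTree X Ω

namespace Moerdijk

variable {X : Type u} {Ω : Type v}

/-- `ℱ(X,Ω)`: decorated planar rooted forests, i.e. the free monoid on decorated
planar rooted trees under concatenation. -/
abbrev RForest (X : Type u) (Ω : Type v) := FreeMonoid (PTree X Ω)

/-- The single-vertex forest `•ₓ` for `x ∈ X`. -/
def leafF (x : X) : RForest X Ω := FreeMonoid.of (PTree.leafX x)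

/-- Grafting of a forest onto a new common root decorated by `ω`. -/
def graft (ω : Ω) (F : RForest X Ω) : RForest X Ω :=
  FreeMonoid.of (PTree.node ω (FreeMonoid.toList F))

variable (k : Type w) [CommRing k]

/-- `H(X,Ω)`: the free `k`-module on decorated planar rooted forests, a unital
associative algebra under the concatenation product. -/
abbrev RAlg (X : Type u) (Ω : Type v) := MonoidAlgebra k (RForest X Ω)

/-- The basis element of `H(X,Ω)` corresponding to a forest `F`. -/
noncomputable def ofF (F : RForest X Ω) : RAlg k X Ω := MonoidAlgebra.of k (RForest X Ω) F

/-- The grafting operator `B⁺_ω : H(X,Ω) → H(X,Ω)` as a linear map. -/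
noncomputable def Bplus (ω : Ω) : RAlg k X Ω →ₗ[k] RAlg k X Ω :=
  MonoidAlgebra.mapDomainLinearMap k k (graft ω)

/-- The value of the coproduct `Δ_λ` on a decorated planar rooted tree:
`Δ_λ(•ₓ) = •ₓ ⊗ 1 + 1 ⊗ •ₓ + λ •ₓ ⊗ •ₓ` and
`Δ_λ(B⁺_ω(F)) = (B⁺_ω ⊗ id)Δ_λ(F) + (id ⊗ B⁺_ω)Δ_λ(F)`. -/
noncomputable def DeltaT (lam : k) : PTree X Ω → (RAlg k X Ω ⊗[k] RAlg k X Ω)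
  | .leafX x =>
      ofF k (leafF x) ⊗ₜ[k] 1 + 1 ⊗ₜ[k] ofF k (leafF x)
        + lam • (ofF k (leafF x) ⊗ₜ[k] ofF k (leafF x))
  | .node ω ts =>
      ((TensorProduct.map (Bplus k ω) LinearMap.id
        + TensorProduct.map LinearMap.id (Bplus k ω) :
          (RAlg k X Ω ⊗[k] RAlg k X Ω) →ₗ[k] (RAlg k X Ω ⊗[k] RAlg k X Ω)))
        ((ts.attach.map fun t => DeltaT lam t.1).prod)
decreasing_by
  have := List.sizeOf_lt_of_mem t.2
  simp only [PTree.node.sizeOf_spec]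
  omega

/-- The value of the coproduct `Δ_λ` on a forest: `Δ_λ(T₁⋯Tₘ) = Δ_λ(T₁)⋯Δ_λ(Tₘ)`. -/
noncomputable def DeltaF (lam : k) (F : RForest X Ω) : RAlg k X Ω ⊗[k] RAlg k X Ω :=
  ((FreeMonoid.toList F).map (DeltaT k lam)).prod

/-- The coproduct `Δ_λ : H(X,Ω) → H(X,Ω) ⊗ H(X,Ω)`. -/
noncomputable def Delta (lam : k) : RAlg k X Ω →ₗ[k] (RAlg k X Ω ⊗[k] RAlg k X Ω) :=
  (Finsupp.lsum k fun F => LinearMap.toSpanSingleton k _ (DeltaF k lam F)) ∘ₗ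
    (MonoidAlgebra.coeffLinearEquiv k).toLinearMap

/-- The counit `ε : H(X,Ω) → k`, sending the empty forest to `1` and every
nonempty forest to `0`. -/
noncomputable def eps : RAlg k X Ω →ₗ[k] k :=
  (Finsupp.lsum k fun F => LinearMap.toSpanSingleton k k
    (if (FreeMonoid.toList F).isEmpty then (1 : k) else 0)) ∘ₗ
    (MonoidAlgebra.coeffLinearEquiv k).toLinearMap

/-!
With no leaves decorated by `X`, every forest is built from the empty forest by concatenation
and grafting, so an algebra map intertwining each `B⁺_ω` with `P_ω` is forced to satisfy
`φ(B⁺_ω(t₁⋯tₘ)) = P_ω(φ(t₁)⋯φ(tₘ))`, and this recursion defines it. Since `Δ_H` is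
multiplicative, compatibility with the coproducts reduces to trees, where it follows by
induction from the cocycle identity for `P_ω` and the recursive definition of `Δ_λ`. For the
counits, applying `ε_H ⊗ ε_H` to the cocycle identity gives `ε_H ∘ P_ω = 2 (ε_H ∘ P_ω)`, so
`ε_H` vanishes on the image of `P_ω` and hence on the image of every nonempty forest.
-/

section Coalgebra

open Coalgebra TensorProduct

variable {R A : Type*} [CommRing R] [AddCommMonoid A] [Module R A] [Coalgebra R A]

theorem mul'_map_counit_right_comul (f : A →ₗ[R] R) (a : A) :
    LinearMap.mul' R R (map f counit (comul a)) = f a := by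
  rw [← LinearMap.rTensor_comp_lTensor, LinearMap.comp_apply, lTensor_counit_comul]
  simp

theorem mul'_map_counit_left_comul (f : A →ₗ[R] R) (a : A) :
    LinearMap.mul' R R (map counit f (comul a)) = f a := by
  rw [← LinearMap.lTensor_comp_rTensor, LinearMap.comp_apply, rTensor_counit_comul]
  simp

def IsOneCocycle (P : A →ₗ[R] A) : Prop :=
  ∀ a, comul (R := R) (P a) = map P .id (comul a) + map .id P (comul a)

theorem IsOneCocycle.counit_apply_eq_zero {P : A →ₗ[R] A} (hP : IsOneCocycle P) (a : A) :
    counit (R := R) (P a) = 0 := by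
  have h : counit (R := R) (P a) = counit (P a) + counit (P a) :=
    calc counit (R := R) (P a) = LinearMap.mul' R R (map counit counit (comul (P a))) :=
          (mul'_map_counit_right_comul _ _).symm
      _ = LinearMap.mul' R R (map (counit ∘ₗ P) counit (comul a))
          + LinearMap.mul' R R (map counit (counit ∘ₗ P) (comul a)) := by
          rw [hP, map_add, map_add, map_map, map_map, LinearMap.comp_id]
      _ = counit (P a) + counit (P a) := by
          rw [mul'_map_counit_right_comul, mul'_map_counit_left_comul, LinearMap.comp_apply]
  exact left_eq_add.mp h

end Coalgebra

theorem _root_.PTree.induction {motive : PTree X Ω → Prop} (leafX : ∀ x, motive (.leafX x))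
    (node : ∀ ω ts, (∀ t ∈ ts, motive t) → motive (.node ω ts)) : ∀ t, motive t
  | .leafX x => leafX x
  | .node ω ts => node ω ts fun t _ => PTree.induction leafX node t

section Forests

variable {k}

theorem ofF_ofList (l : List (PTree X Ω)) :
    ofF k (FreeMonoid.ofList l) = (l.map fun t => ofF k (FreeMonoid.of t)).prod := by
  induction l with
  | nil => exact map_one (MonoidAlgebra.of k (RForest X Ω))
  | cons t l ih =>
    rw [FreeMonoid.ofList_cons, List.map_cons, List.prod_cons, ← ih]
    exact map_mul (MonoidAlgebra.of k (RForest X Ω)) _ _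

theorem Bplus_ofF (ω : Ω) (F : RForest X Ω) : Bplus k ω (ofF k F) = ofF k (graft ω F) :=
  MonoidAlgebra.mapDomainLinearMap_single _ _ _

theorem Delta_ofF (lam : k) (F : RForest X Ω) : Delta k lam (ofF k F) = DeltaF k lam F := by
  simp [Delta, ofF]

theorem eps_ofF (F : RForest X Ω) :
    eps k (ofF k F) = if (FreeMonoid.toList F).isEmpty then 1 else 0 := by
  simp [eps, ofF]

theorem linearMap_ext_ofF {N : Type*} [AddCommMonoid N] [Module k N]
    {f g : RAlg k X Ω →ₗ[k] N} (h : ∀ F, f (ofF k F) = g (ofF k F)) : f = g :=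
  MonoidAlgebra.lhom_ext' fun F => LinearMap.ext_ring (h F)

end Forests

section Lift

variable {k} {A : Type*} [Semiring A] [Algebra k A] (P : Ω → A →ₗ[k] A)

noncomputable def liftTree : PTree PEmpty.{1} Ω → A
  | .leafX x => x.elim
  | .node ω ts => P ω (ts.map liftTree).prod

noncomputable def lift : RAlg k PEmpty.{1} Ω →ₐ[k] A :=
  MonoidAlgebra.lift k A (RForest PEmpty.{1} Ω) (FreeMonoid.lift (liftTree P))

theorem lift_ofF (F : RForest PEmpty.{1} Ω) :
    lift P (ofF k F) = ((FreeMonoid.toList F).map (liftTree P)).prod := by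
  simp [lift, ofF, FreeMonoid.lift_apply]

theorem lift_Bplus (ω : Ω) (y : RAlg k PEmpty.{1} Ω) :
    lift P (Bplus k ω y) = P ω (lift P y) := by
  have h : (lift P).toLinearMap ∘ₗ Bplus k ω = P ω ∘ₗ (lift P).toLinearMap :=
    linearMap_ext_ofF fun F => by simp [Bplus_ofF, lift_ofF, graft, liftTree]
  exact LinearMap.congr_fun h y

theorem eq_lift_of_comp_Bplus (ψ : RAlg k PEmpty.{1} Ω →ₐ[k] A)
    (hψ : ∀ ω y, ψ (Bplus k ω y) = P ω (ψ y)) : ψ = lift P := by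
  have on_trees : ∀ t, ψ (ofF k (FreeMonoid.of t)) = liftTree P t := by
    refine PTree.induction (fun x => x.elim) fun ω ts ih => ?_
    have hgraft : FreeMonoid.of (PTree.node ω ts) = graft ω (FreeMonoid.ofList ts) := rfl
    rw [hgraft, ← Bplus_ofF, hψ, ofF_ofList, map_list_prod, List.map_map, liftTree]
    exact congrArg (fun l => P ω l.prod) (List.map_congr_left ih)
  refine MonoidAlgebra.algHom_ext' (FreeMonoid.hom_eq fun t => ?_) (Subsingleton.elim _ _)
  change ψ (ofF k (FreeMonoid.of t)) = lift P (ofF k (FreeMonoid.of t))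
  rw [on_trees, lift_ofF, FreeMonoid.toList_of, List.map_singleton, List.prod_singleton]

end Lift

section CocycleBialgebra

open Coalgebra TensorProduct

variable {k} {A : Type*} [Semiring A] [Bialgebra k A] (P : Ω → A →ₗ[k] A) (lam : k)

theorem comul_prod_map_liftTree (l : List (PTree PEmpty.{1} Ω))
    (hl : ∀ t ∈ l, comul (R := k) (liftTree P t)
      = map (lift P).toLinearMap (lift P).toLinearMap (DeltaT k lam t)) :
    comul (R := k) (l.map (liftTree P)).prod
      = map (lift P).toLinearMap (lift P).toLinearMap (l.map (DeltaT k lam)).prod := by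
  change Bialgebra.comulAlgHom k A _ = Algebra.TensorProduct.map (lift P) (lift P) _
  rw [map_list_prod, map_list_prod, List.map_map, List.map_map]
  congr 1
  exact List.map_congr_left hl

variable {P}

theorem comul_liftTree
    (hP : ∀ ω, IsOneCocycle (P ω))
    (t : PTree PEmpty.{1} Ω) :
    comul (R := k) (liftTree P t)
      = map (lift P).toLinearMap (lift P).toLinearMap (DeltaT k lam t) := by
  induction t using PTree.induction with
  | leafX x => exact x.elim
  | node ω ts ih =>
    have hB : (lift P).toLinearMap ∘ₗ Bplus k ω = P ω ∘ₗ (lift P).toLinearMap :=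
      LinearMap.ext (lift_Bplus P ω)
    rw [liftTree, DeltaT, List.attach_map_val, hP ω, comul_prod_map_liftTree P lam ts ih,
      LinearMap.add_apply, map_add, map_map, map_map, map_map, map_map, hB, LinearMap.id_comp,
      LinearMap.comp_id]

theorem comul_lift
    (hP : ∀ ω, IsOneCocycle (P ω))
    (y : RAlg k PEmpty.{1} Ω) :
    comul (R := k) (lift P y) = map (lift P).toLinearMap (lift P).toLinearMap (Delta k lam y) := by
  have h : comul ∘ₗ (lift P).toLinearMap
      = map (lift P).toLinearMap (lift P).toLinearMap ∘ₗ Delta k lam :=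
    linearMap_ext_ofF fun F => by
      simpa [lift_ofF, Delta_ofF, DeltaF] using
        comul_prod_map_liftTree P lam _ fun t _ => comul_liftTree lam hP t
  exact LinearMap.congr_fun h y

theorem counit_liftTree
    (hP : ∀ ω, IsOneCocycle (P ω))
    (t : PTree PEmpty.{1} Ω) : counit (R := k) (liftTree P t) = 0 := by
  cases t with
  | leafX x => exact x.elim
  | node ω ts => rw [liftTree]; exact (hP ω).counit_apply_eq_zero _

theorem counit_lift
    (hP : ∀ ω, IsOneCocycle (P ω))
    (y : RAlg k PEmpty.{1} Ω) : counit (R := k) (lift P y) = eps k y := by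
  have h : counit ∘ₗ (lift P).toLinearMap = eps k :=
    linearMap_ext_ofF fun F => by
      rw [LinearMap.comp_apply, AlgHom.toLinearMap_apply, lift_ofF, eps_ofF,
        ← Bialgebra.counitAlgHom_apply, map_list_prod]
      cases FreeMonoid.toList F with
      | nil => simp
      | cons t l => simp [counit_liftTree hP t]
  exact LinearMap.congr_fun h y

end CocycleBialgebra

theorem initial_cocycle_bialgebra (lam : k) :
    ∀ (H' : Type u') [Semiring H'] [Bialgebra k H'] (P : Ω → H' →ₗ[k] H'),
      (∀ (ω : Ω) (y : H'), Coalgebra.comul (R := k) (P ω y)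
        = TensorProduct.map (P ω) LinearMap.id (Coalgebra.comul (R := k) y)
          + TensorProduct.map LinearMap.id (P ω) (Coalgebra.comul (R := k) y)) →
      ∃! φ : RAlg k PEmpty.{1} Ω →ₐ[k] H',
        (∀ (ω : Ω) (y : RAlg k PEmpty.{1} Ω), φ (Bplus k ω y) = P ω (φ y)) ∧
        (∀ y : RAlg k PEmpty.{1} Ω, Coalgebra.comul (R := k) (φ y)
          = TensorProduct.map φ.toLinearMap φ.toLinearMap (Delta k lam y)) ∧
        (∀ y : RAlg k PEmpty.{1} Ω, Coalgebra.counit (R := k) (φ y) = eps k y) := by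
  intro H' _ _ P hP
  exact ⟨lift P, ⟨lift_Bplus P, comul_lift lam hP, counit_lift hP⟩,
    fun ψ hψ => eq_lift_of_comp_Bplus P ψ hψ.1⟩

end Moerdijk
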